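/- For every real number q ∈ (0,1], the q-quantile stable mechanism φ^q is manipulable: in the market M_k with k chosen so that ⌈kq⌉ = 2, the truncated preference P1′ (ranking only x¹ as acceptable) is a manipulation of φ^q at doctor d1's true preference P1, since φ^q_{d1}(P1′, P2) = x¹ P1 x² = φ^q_{d1}(P1, P2) for every P2. -/

import Mathlib

/-- A one-to-one matching market with contracts: a finite set `X` of contracts,
finite sets `D` of doctors and `H` of hospitals, maps assigning to each contract
its doctor and its hospital, and fixed, publicly known hospital preferences
(strict linear orders over the hospital's contracts together with `none` = ∅). -/
structure Market where
  X : Type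
  D : Type
  H : Type
  [fintypeX : Fintype X]
  [fintypeD : Fintype D]
  [fintypeH : Fintype H]
  [decEqX : DecidableEq X]
  [decEqD : DecidableEq D]
  [decEqH : DecidableEq H]
  doc : X → D
  hos : X → H
  hpref : ∀ h : H, LinearOrder (Option {x : X // hos x = h})

attribute [instance] Market.fintypeX Market.fintypeD Market.fintypeH
attribute [instance] Market.decEqX Market.decEqD Market.decEqH

namespace Market

variable (M : Market)

/-- The contracts involving doctor `d`. -/
abbrev Xd (d : M.D) : Type := {x : M.X // M.doc x = d}

/-- The contracts involving hospital `h`. -/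
abbrev Xh (h : M.H) : Type := {x : M.X // M.hos x = h}

/-- A (strict) preference for doctor `d`: a linear order on `X_d ∪ {∅}`,
where `none` plays the role of ∅ and "larger" means "more preferred". -/
abbrev DocPref (d : M.D) : Type := LinearOrder (Option (M.Xd d))

/-- A profile of doctor preferences. -/
abbrev Prof : Type := ∀ d : M.D, M.DocPref d

/-- `Y` is an allocation: distinct contracts of `Y` involve distinct doctors and
distinct hospitals. -/
def IsAllocation (Y : Finset M.X) : Prop :=
  ∀ x ∈ Y, ∀ y ∈ Y, x ≠ y → M.doc x ≠ M.doc y ∧ M.hos x ≠ M.hos y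

/-- `Y_d`: the contract of `Y` involving doctor `d` (there is a unique one when `Y`
is an allocation), or `none` (= ∅) if there is none. -/
noncomputable def allocD (Y : Finset M.X) (d : M.D) : Option (M.Xd d) :=
  if h : ∃ x ∈ Y, M.doc x = d then some ⟨h.choose, h.choose_spec.2⟩ else none

/-- `Y_h`: the contract of `Y` involving hospital `h`, or `none` (= ∅) if there is none. -/
noncomputable def allocH (Y : Finset M.X) (h : M.H) : Option (M.Xh h) :=
  if hh : ∃ x ∈ Y, M.hos x = h then some ⟨hh.choose, hh.choose_spec.2⟩ else none

/-- Individual rationality: every agent weakly prefers its assignment to ∅. -/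
def IndividuallyRational (P : M.Prof) (Y : Finset M.X) : Prop :=
  (∀ d : M.D, (P d).le none (M.allocD Y d)) ∧
  (∀ h : M.H, (M.hpref h).le none (M.allocH Y h))

/-- Contract `x` blocks `Y`: `x ∉ Y` and both the doctor and the hospital of `x`
strictly prefer `x` to their assignment under `Y`. -/
def Blocks (P : M.Prof) (Y : Finset M.X) (x : M.X) : Prop :=
  x ∉ Y ∧ (P (M.doc x)).lt (M.allocD Y (M.doc x)) (some ⟨x, rfl⟩) ∧
    (M.hpref (M.hos x)).lt (M.allocH Y (M.hos x)) (some ⟨x, rfl⟩)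

/-- `Y` is stable: it is an individually rational allocation and no contract blocks it. -/
def IsStable (P : M.Prof) (Y : Finset M.X) : Prop :=
  M.IsAllocation Y ∧ M.IndividuallyRational P Y ∧ ∀ x : M.X, ¬ M.Blocks P Y x

/-- A (matching) mechanism: a map from doctor-preference profiles to sets of contracts. -/
abbrev Mech : Type := M.Prof → Finset M.X

/-- `φ_d(P)`: the contract assigned to doctor `d` by mechanism `φ` at profile `P`. -/
noncomputable def assign (φ : M.Mech) (P : M.Prof) (d : M.D) : Option (M.Xd d) :=
  M.allocD (φ P) d

/-- `Pd'` is a manipulation of `φ` at true preference `Pd` for doctor `d`: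
for some subprofile of the other doctors, reporting `Pd'` yields an outcome that
`d` strictly prefers (under the true `Pd`) to the outcome from reporting `Pd`. -/
def IsManipulation (φ : M.Mech) (d : M.D) (Pd Pd' : M.DocPref d) : Prop :=
  ∃ P : M.Prof,
    Pd.lt (M.assign φ (Function.update P d Pd) d) (M.assign φ (Function.update P d Pd') d)

/-- `φ` is non-manipulable (strategy-proof). -/
def NonManipulable (φ : M.Mech) : Prop :=
  ∀ (d : M.D) (Pd Pd' : M.DocPref d), ¬ M.IsManipulation φ d Pd Pd'

/-- The option set `O^φ(Pd)` left open by report `Pd` of doctor `d`. -/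
def optionSet (φ : M.Mech) (d : M.D) (Pd : M.DocPref d) : Set (Option (M.Xd d)) :=
  {o | ∃ P : M.Prof, o = M.assign φ (Function.update P d Pd) d}

/-- `a` is the `Pd`-worst element of `S` (i.e. `a = W_d(Pd, S)`). -/
def IsWorst (d : M.D) (Pd : M.DocPref d) (S : Set (Option (M.Xd d)))
    (a : Option (M.Xd d)) : Prop :=
  a ∈ S ∧ ∀ b ∈ S, Pd.le a b

/-- `a` is the `Pd`-best element of `S` (i.e. `a = C_d(Pd, S)`). -/
def IsBest (d : M.D) (Pd : M.DocPref d) (S : Set (Option (M.Xd d)))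
    (a : Option (M.Xd d)) : Prop :=
  a ∈ S ∧ ∀ b ∈ S, Pd.le b a

/-- `Pd'` is an obvious manipulation of `φ` at `Pd`: it is a manipulation and either
`W_d(Pd, O^φ(Pd')) P_d W_d(Pd, O^φ(Pd))` or `C_d(Pd, O^φ(Pd')) P_d C_d(Pd, O^φ(Pd))`. -/
def IsObviousManipulation (φ : M.Mech) (d : M.D) (Pd Pd' : M.DocPref d) : Prop :=
  M.IsManipulation φ d Pd Pd' ∧
    ((∃ a b, M.IsWorst d Pd (M.optionSet φ d Pd') a ∧
        M.IsWorst d Pd (M.optionSet φ d Pd) b ∧ Pd.lt b a) ∨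
     (∃ a b, M.IsBest d Pd (M.optionSet φ d Pd') a ∧
        M.IsBest d Pd (M.optionSet φ d Pd) b ∧ Pd.lt b a))

/-- `φ` is not obviously manipulable (NOM). -/
def NOM (φ : M.Mech) : Prop :=
  ∀ (d : M.D) (Pd Pd' : M.DocPref d), ¬ M.IsObviousManipulation φ d Pd Pd'

open Classical in
/-- The (finite) set of all stable allocations at profile `P`. -/
noncomputable def stableSet (P : M.Prof) : Finset (Finset M.X) :=
  @Finset.filter _ (fun Y => M.IsStable P Y) (Classical.decPred _) Finset.univ

/-- The list of doctor `d`'s assignments across all stable allocations at `P`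
(with multiplicity), ordered from best to worst according to `P d`. -/
noncomputable def sortedStable (P : M.Prof) (d : M.D) : List (Option (M.Xd d)) :=
  letI := P d
  ((M.stableSet P).val.map (fun Y => M.allocD Y d)).sort (· ≥ ·)

/-- `X^{(j)}_d`: doctor `d`'s `j`-th best stable assignment at `P` (for `1 ≤ j ≤ k`,
`k` the number of stable allocations). -/
noncomputable def nthBest (P : M.Prof) (d : M.D) (j : ℕ) : Option (M.Xd d) :=
  ((M.sortedStable P d)[j - 1]?).join

/-- The `j`-th quantile stable allocation `X^{(j)} = ⋃_{d ∈ D} X^{(j)}_d` at `P`. -/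
noncomputable def quantileAlloc (P : M.Prof) (j : ℕ) : Finset M.X :=
  Finset.univ.filter (fun x => M.nthBest P (M.doc x) j = some ⟨x, rfl⟩)

/-- The `q`-quantile stable mechanism `φ^q`: at a profile with `k` stable allocations
it selects the `⌈kq⌉`-th quantile stable allocation (with `⌈0⌉` taken to be `1`). -/
noncomputable def quantileMech (q : ℝ) : M.Mech :=
  fun P => M.quantileAlloc P (max 1 ⌈((M.stableSet P).card : ℝ) * q⌉₊)

/-- `Y` is the doctor-optimal stable allocation at `P`: it is stable and every doctor
weakly prefers it to every other stable allocation. -/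
def IsDoctorOptimal (P : M.Prof) (Y : Finset M.X) : Prop :=
  M.IsStable P Y ∧
    ∀ Z : Finset M.X, M.IsStable P Z → ∀ d : M.D, (P d).le (M.allocD Z d) (M.allocD Y d)

/-- `Y` is the hospital-optimal stable allocation at `P`. -/
def IsHospitalOptimal (P : M.Prof) (Y : Finset M.X) : Prop :=
  M.IsStable P Y ∧
    ∀ Z : Finset M.X, M.IsStable P Z → ∀ h : M.H, (M.hpref h).le (M.allocH Z h) (M.allocH Y h)

end Market

namespace MkMarket

/-- Doctor map for the market `M_k`: contracts `x^t` (encoded `Sum.inl t`) belong to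
doctor `d1 = false`; contract `w` (encoded `Sum.inr ()`) belongs to doctor `d2 = true`. -/
def mdoc (k : ℕ) : (Fin k ⊕ Unit) → Bool := Sum.elim (fun _ => false) (fun _ => true)

/-- Hospital map for the market `M_k`: each `x^t` involves hospital `h1 = false`
and `w` involves hospital `h2 = true`. -/
def mhos (k : ℕ) : (Fin k ⊕ Unit) → Bool := Sum.elim (fun _ => false) (fun _ => true)

/-- Ranking realizing the fixed hospital preferences of `M_k`:
`h1` ranks `x^k P x^{k-1} P … P x^1 P ∅`, and `h2` ranks `w P ∅`. -/
def hrank (k : ℕ) (h : Bool) : Option {x : Fin k ⊕ Unit // mhos k x = h} → ℕ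
  | none => 0
  | some ⟨Sum.inl t, _⟩ => t.val + 1
  | some ⟨Sum.inr _, _⟩ => 1

lemma hrank_injective (k : ℕ) (h : Bool) : Function.Injective (hrank k h) := by
  rintro (_ | ⟨(t | u), hx⟩) (_ | ⟨(s | v), hy⟩) hab <;>
    simp only [hrank] at hab
  · rfl
  · omega
  · exact absurd hab (by omega)
  · omega
  · have : t = s := Fin.ext (by omega)
    subst this; rfl
  · exact Bool.noConfusion (hx.trans hy.symm)
  · exact absurd hab (by omega)
  · exact Bool.noConfusion (hy.trans hx.symm)
  · rfl

/-- The market `M_k` of the proof of the Theorem: doctors `d1 = false`, `d2 = true`,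
hospitals `h1 = false`, `h2 = true`, contracts `x^1, …, x^k` (encoded as `Sum.inl 0, …,
Sum.inl (k-1)`) between `d1` and `h1`, and `w` (encoded `Sum.inr ()`) between `d2` and `h2`;
hospital preferences: `x^k P … P x^1 P ∅` for `h1` and `w P ∅` for `h2`. -/
def Mk (k : ℕ) : Market where
  X := Fin k ⊕ Unit
  D := Bool
  H := Bool
  doc := mdoc k
  hos := mhos k
  hpref h := LinearOrder.lift' (hrank k h) (hrank_injective k h)

/-- The contract `x^{t+1}` of `M_k`, viewed as a contract of doctor `d1 = false`. -/
def xC (k : ℕ) (t : Fin k) : (Mk k).Xd false := ⟨Sum.inl t, rfl⟩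

/-- The contract `w` of `M_k`, viewed as a contract of doctor `d2 = true`. -/
def wC (k : ℕ) : (Mk k).Xd true := ⟨Sum.inr (), rfl⟩

/-- Ranking realizing `d1`'s true preference `P1 = x^1, x^2, …, x^k` (then ∅). -/
def drank1 (k : ℕ) : Option ((Mk k).Xd false) → ℕ
  | none => 0
  | some ⟨Sum.inl t, _⟩ => k - t.val
  | some ⟨Sum.inr _, _⟩ => 0

lemma drank1_injective (k : ℕ) : Function.Injective (drank1 k) := by
  rintro (_ | ⟨(t | u), hx⟩) (_ | ⟨(s | v), hy⟩) hab <;>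
    simp only [drank1] at hab
  · rfl
  · have := s.isLt; omega
  · exact Bool.noConfusion hy
  · have := t.isLt; omega
  · have h1 := t.isLt; have h2 := s.isLt
    have : t = s := Fin.ext (by omega)
    subst this; rfl
  · exact Bool.noConfusion hy
  · exact Bool.noConfusion hx
  · exact Bool.noConfusion hx
  · exact Bool.noConfusion hx

/-- `d1`'s true preference `P1`: `x^1 P x^2 P … P x^k P ∅`. -/
def P1 (k : ℕ) : (Mk k).DocPref false :=
  LinearOrder.lift' (drank1 k) (drank1_injective k)

/-- `Q` is the truncated preference `P1'` of `d1`: it ranks `x^1 P ∅` and declares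
every other contract unacceptable (`∅ P x^t` for all `t ≠ 1`). -/
def IsTruncation (k : ℕ) (hk : 0 < k) (Q : (Mk k).DocPref false) : Prop :=
  Q.lt none (some (xC k ⟨0, hk⟩)) ∧
    ∀ t : Fin k, t.val ≠ 0 → Q.lt (some (xC k t)) none

/-- Ranking realizing the truncated preference `P1' = x^1` (then ∅, then the rest). -/
def drank1' (k : ℕ) : Option ((Mk k).Xd false) → ℕ
  | none => k
  | some ⟨Sum.inl t, _⟩ => if t.val = 0 then k + 1 else k - t.val
  | some ⟨Sum.inr _, _⟩ => 0

lemma drank1'_injective (k : ℕ) : Function.Injective (drank1' k) := by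
  rintro (_ | ⟨(t | u), hx⟩) (_ | ⟨(s | v), hy⟩) hab <;>
    simp only [drank1'] at hab
  · rfl
  · have := s.isLt; split_ifs at hab <;> omega
  · exact Bool.noConfusion hy
  · have := t.isLt; split_ifs at hab <;> omega
  · have h1 := t.isLt; have h2 := s.isLt
    have : t = s := Fin.ext (by split_ifs at hab <;> omega)
    subst this; rfl
  · exact Bool.noConfusion hy
  · exact Bool.noConfusion hx
  · exact Bool.noConfusion hx
  · exact Bool.noConfusion hx

/-- A concrete realization of the truncated preference `P1'`. -/
def P1' (k : ℕ) : (Mk k).DocPref false :=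
  LinearOrder.lift' (drank1' k) (drank1'_injective k)

/-- The profile `(Q1, Q2)` of doctor preferences in `M_k`. -/
def prof (k : ℕ) (Q1 : (Mk k).DocPref false) (Q2 : (Mk k).DocPref true) : (Mk k).Prof :=
  fun d => match d with
  | false => Q1
  | true => Q2

end MkMarket


/-! ### Auxiliary lemmas -/

section LO

variable {α : Type*} (L : LinearOrder α) {a b c : α}

lemma lo_le_of_lt (h : L.lt a b) : L.le a b := by letI := L; exact le_of_lt h

lemma lo_le_refl (a : α) : L.le a a := by letI := L; exact le_refl a

lemma lo_lt_of_le_of_ne (h : L.le a b) (h2 : a ≠ b) : L.lt a b := by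
  letI := L; exact lt_of_le_of_ne h h2

lemma lo_not_le_of_lt (h : L.lt a b) : ¬ L.le b a := by letI := L; exact not_le_of_gt h

lemma lo_lt_trans (h : L.lt a b) (h2 : L.lt b c) : L.lt a c := by letI := L; exact lt_trans h h2

lemma lo_lt_irrefl (a : α) : ¬ L.lt a a := by letI := L; exact lt_irrefl a

end LO

lemma sort_eq_of_sorted {α : Type*} {r : α → α → Prop} [DecidableRel r] [IsTrans α r]
    [IsAntisymm α r] [IsTotal α r] {m : Multiset α} {L : List α} (hm : m = ↑L)
    (hs : L.Pairwise r) : m.sort r = L :=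
  List.Perm.eq_of_pairwise' (Multiset.pairwise_sort m r) hs
    (Multiset.coe_eq_coe.1 (by rw [Multiset.sort_eq, hm]))

namespace Market

variable (M : Market)

lemma allocD_eq_some' {Y : Finset M.X} {d : M.D} {x : M.X}
    (hx : x ∈ Y) (hd : M.doc x = d)
    (huniq : ∀ y ∈ Y, M.doc y = d → y = x) :
    M.allocD Y d = some ⟨x, hd⟩ := by
  have h : ∃ z ∈ Y, M.doc z = d := ⟨x, hx, hd⟩
  unfold Market.allocD
  rw [dif_pos h]
  exact congrArg some (Subtype.ext (huniq _ h.choose_spec.1 h.choose_spec.2))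

lemma allocD_eq_none' {Y : Finset M.X} {d : M.D}
    (h : ∀ y ∈ Y, M.doc y ≠ d) : M.allocD Y d = none := by
  unfold Market.allocD
  rw [dif_neg]
  rintro ⟨z, hz, hzd⟩
  exact h z hz hzd

lemma allocH_eq_some' {Y : Finset M.X} {d : M.H} {x : M.X}
    (hx : x ∈ Y) (hd : M.hos x = d)
    (huniq : ∀ y ∈ Y, M.hos y = d → y = x) :
    M.allocH Y d = some ⟨x, hd⟩ := by
  have h : ∃ z ∈ Y, M.hos z = d := ⟨x, hx, hd⟩
  unfold Market.allocH
  rw [dif_pos h]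
  exact congrArg some (Subtype.ext (huniq _ h.choose_spec.1 h.choose_spec.2))

lemma allocH_eq_none' {Y : Finset M.X} {d : M.H}
    (h : ∀ y ∈ Y, M.hos y ≠ d) : M.allocH Y d = none := by
  unfold Market.allocH
  rw [dif_neg]
  rintro ⟨z, hz, hzd⟩
  exact h z hz hzd

end Market

namespace MkMarket

variable {k : ℕ}

/-- Rank/order characterizations. -/
lemma hpref_lt_iff {h : Bool} {a b : Option ((Mk k).Xh h)} :
    ((Mk k).hpref h).lt a b ↔ hrank k h a < hrank k h b := Iff.rfl

lemma hpref_le_iff {h : Bool} {a b : Option ((Mk k).Xh h)} :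
    ((Mk k).hpref h).le a b ↔ hrank k h a ≤ hrank k h b := Iff.rfl

lemma P1_lt_iff {a b : Option ((Mk k).Xd false)} :
    (P1 k).lt a b ↔ drank1 k a < drank1 k b := Iff.rfl

lemma P1_le_iff {a b : Option ((Mk k).Xd false)} :
    (P1 k).le a b ↔ drank1 k a ≤ drank1 k b := Iff.rfl

open Classical in
/-- The candidate stable allocations. -/
noncomputable def SW (k : ℕ) (P2 : (Mk k).DocPref true) (t : Fin k) : Finset ((Mk k).X) :=
  if P2.lt none (some (wC k)) then ({(Sum.inl t : (Mk k).X), (Sum.inr () : (Mk k).X)} : Finset (Mk k).X)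
    else ({(Sum.inl t : (Mk k).X)} : Finset (Mk k).X)

variable {P2 : (Mk k).DocPref true} {t : Fin k}

lemma mem_SW {x : (Mk k).X} :
    x ∈ SW k P2 t ↔ x = Sum.inl t ∨ (P2.lt none (some (wC k)) ∧ x = Sum.inr ()) := by
  unfold SW
  split_ifs with h
  · exact Finset.mem_insert.trans (or_congr Iff.rfl (Finset.mem_singleton.trans (and_iff_right h).symm))
  · exact Finset.mem_singleton.trans (or_iff_left (fun hh => h hh.1)).symm

lemma inl_mem_SW {s : Fin k} (hs : Sum.inl s ∈ SW k P2 t) : s = t := by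
  rcases mem_SW.1 hs with h | ⟨-, h⟩
  · exact Sum.inl.inj h
  · exact absurd h Sum.inl_ne_inr

lemma inr_mem_SW : (Sum.inr () : (Mk k).X) ∈ SW k P2 t ↔ P2.lt none (some (wC k)) := by
  refine mem_SW.trans ?_
  constructor
  · rintro (h | ⟨h, -⟩)
    · exact absurd h Sum.inr_ne_inl
    · exact h
  · intro h
    exact Or.inr ⟨h, rfl⟩

lemma SW_injective : Function.Injective (SW k P2) := fun s t h =>
  inl_mem_SW (h ▸ mem_SW.2 (Or.inl rfl))

lemma isAllocation_SW : (Mk k).IsAllocation (SW k P2 t) := by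
  intro x hx y hy hxy
  rcases mem_SW.1 hx with rfl | ⟨-, rfl⟩ <;> rcases mem_SW.1 hy with rfl | ⟨-, rfl⟩
  · exact absurd rfl hxy
  · exact ⟨fun h => Bool.noConfusion h, fun h => Bool.noConfusion h⟩
  · exact ⟨fun h => Bool.noConfusion h, fun h => Bool.noConfusion h⟩
  · exact absurd rfl hxy

/-! ### `allocD`/`allocH` computations in `Mk k` -/

lemma allocD_false_of_mem {Y : Finset (Mk k).X}
    (ht : Sum.inl t ∈ Y) (huniq : ∀ s : Fin k, Sum.inl s ∈ Y → s = t) :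
    (Mk k).allocD Y false = some (xC k t) := by
  apply (Mk k).allocD_eq_some' ht rfl
  intro y hy hd
  cases y with
  | inl s => exact congrArg Sum.inl (huniq s hy)
  | inr u => exact absurd hd (fun h => Bool.noConfusion h)

lemma allocD_false_none {Y : Finset (Mk k).X}
    (h : ∀ s : Fin k, Sum.inl s ∉ Y) : (Mk k).allocD Y false = none := by
  apply (Mk k).allocD_eq_none'
  intro y hy
  cases y with
  | inl s => exact absurd hy (h s)
  | inr u => exact fun hd => Bool.noConfusion hd

lemma allocD_true_some {Y : Finset (Mk k).X} (h : Sum.inr () ∈ Y) :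
    (Mk k).allocD Y true = some (wC k) := by
  apply (Mk k).allocD_eq_some' h rfl
  intro y hy hd
  cases y with
  | inl s => exact absurd hd (fun hh => Bool.noConfusion hh)
  | inr u => cases u; rfl

lemma allocD_true_none {Y : Finset (Mk k).X} (h : Sum.inr () ∉ Y) :
    (Mk k).allocD Y true = none := by
  apply (Mk k).allocD_eq_none'
  intro y hy
  cases y with
  | inl s => exact fun hd => Bool.noConfusion hd
  | inr u => cases u; exact fun _ => h hy

lemma allocH_false_of_mem {Y : Finset (Mk k).X}
    (ht : Sum.inl t ∈ Y) (huniq : ∀ s : Fin k, Sum.inl s ∈ Y → s = t) :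
    (Mk k).allocH Y false = some ⟨Sum.inl t, rfl⟩ := by
  apply (Mk k).allocH_eq_some' ht rfl
  intro y hy hd
  cases y with
  | inl s => exact congrArg Sum.inl (huniq s hy)
  | inr u => exact absurd hd (fun h => Bool.noConfusion h)

lemma allocH_false_none {Y : Finset (Mk k).X}
    (h : ∀ s : Fin k, Sum.inl s ∉ Y) : (Mk k).allocH Y false = none := by
  apply (Mk k).allocH_eq_none'
  intro y hy
  cases y with
  | inl s => exact absurd hy (h s)
  | inr u => exact fun hd => Bool.noConfusion hd

lemma allocH_true_some {Y : Finset (Mk k).X} (h : Sum.inr () ∈ Y) :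
    (Mk k).allocH Y true = some ⟨Sum.inr (), rfl⟩ := by
  apply (Mk k).allocH_eq_some' h rfl
  intro y hy hd
  cases y with
  | inl s => exact absurd hd (fun hh => Bool.noConfusion hh)
  | inr u => cases u; rfl

lemma allocH_true_none {Y : Finset (Mk k).X} (h : Sum.inr () ∉ Y) :
    (Mk k).allocH Y true = none := by
  apply (Mk k).allocH_eq_none'
  intro y hy
  cases y with
  | inl s => exact fun hd => Bool.noConfusion hd
  | inr u => cases u; exact fun _ => h hy

lemma allocD_SW_false : (Mk k).allocD (SW k P2 t) false = some (xC k t) :=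
  allocD_false_of_mem (mem_SW.2 (Or.inl rfl)) (fun _ hs => inl_mem_SW hs)

lemma allocH_SW_false : (Mk k).allocH (SW k P2 t) false = some ⟨Sum.inl t, rfl⟩ :=
  allocH_false_of_mem (mem_SW.2 (Or.inl rfl)) (fun _ hs => inl_mem_SW hs)

/-! ### Blocking/IR helpers common to both profiles -/

/-- The `w` part of the IR / no-blocking analysis, for any preference `Q` of `d1`. -/
lemma w_mem_of_stable {Q : (Mk k).DocPref false} {Y : Finset (Mk k).X}
    (h : (Mk k).IsStable (prof k Q P2) Y)
    (hacc : P2.lt none (some (wC k))) : Sum.inr () ∈ Y := by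
  by_contra hno
  refine h.2.2 (Sum.inr ()) ⟨hno, ?_, ?_⟩
  · show P2.lt ((Mk k).allocD Y true) (some (wC k))
    rw [allocD_true_none hno]
    exact hacc
  · show ((Mk k).hpref true).lt ((Mk k).allocH Y true) (some ⟨Sum.inr (), rfl⟩)
    rw [allocH_true_none hno]
    exact hpref_lt_iff.2 (by show (0 : ℕ) < 1; omega)

lemma w_not_mem_of_stable {Q : (Mk k).DocPref false} {Y : Finset (Mk k).X}
    (h : (Mk k).IsStable (prof k Q P2) Y)
    (hacc : ¬ P2.lt none (some (wC k))) : Sum.inr () ∉ Y := by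
  intro hmem
  have h5 : P2.le none ((Mk k).allocD Y true) := h.2.1.1 true
  rw [allocD_true_some hmem] at h5
  exact hacc (lo_lt_of_le_of_ne P2 h5 (fun hh => by cases hh))

lemma inl_uniq_of_alloc {Y : Finset (Mk k).X} (hA : (Mk k).IsAllocation Y)
    {s t : Fin k} (hs : Sum.inl s ∈ Y) (ht : Sum.inl t ∈ Y) : s = t := by
  by_contra hne
  exact (hA _ hs _ ht (fun hh => hne (Sum.inl.inj hh))).1 rfl

lemma exists_inl_of_stable {Q : (Mk k).DocPref false} {Y : Finset (Mk k).X}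
    (hk : 0 < k) (h : (Mk k).IsStable (prof k Q P2) Y)
    (h0 : Q.lt none (some (xC k ⟨0, hk⟩))) : ∃ t : Fin k, Sum.inl t ∈ Y := by
  by_contra hno
  push_neg at hno
  refine h.2.2 (Sum.inl ⟨0, hk⟩) ⟨hno _, ?_, ?_⟩
  · show Q.lt ((Mk k).allocD Y false) (some (xC k ⟨0, hk⟩))
    rw [allocD_false_none hno]
    exact h0
  · show ((Mk k).hpref false).lt ((Mk k).allocH Y false) (some ⟨Sum.inl ⟨0, hk⟩, rfl⟩)
    rw [allocH_false_none hno]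
    exact hpref_lt_iff.2 (by show (0 : ℕ) < (0 : ℕ) + 1; omega)

lemma eq_SW_of_stable {Q : (Mk k).DocPref false} {Y : Finset (Mk k).X}
    (h : (Mk k).IsStable (prof k Q P2) Y) {t : Fin k} (ht : Sum.inl t ∈ Y) :
    Y = SW k P2 t := by
  by_cases hacc : P2.lt none (some (wC k))
  · have hw := w_mem_of_stable h hacc
    refine Finset.ext fun x => ?_
    rw [mem_SW]
    constructor
    · intro hx
      cases x with
      | inl s => exact Or.inl (congrArg Sum.inl (inl_uniq_of_alloc h.1 hx ht))
      | inr u => cases u; exact Or.inr ⟨hacc, rfl⟩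
    · rintro (rfl | ⟨-, rfl⟩)
      · exact ht
      · exact hw
  · have hw := w_not_mem_of_stable h hacc
    refine Finset.ext fun x => ?_
    rw [mem_SW]
    constructor
    · intro hx
      cases x with
      | inl s => exact Or.inl (congrArg Sum.inl (inl_uniq_of_alloc h.1 hx ht))
      | inr u => cases u; exact absurd hx hw
    · rintro (rfl | ⟨hacc', rfl⟩)
      · exact ht
      · exact absurd hacc' hacc

/-- Common part of the stability proof of `SW t` (IR for `d2`, `h1`, `h2`, and
no blocking by `w` or by any `x^s` on the hospital side handled separately). -/
lemma isStable_SW_of {Q : (Mk k).DocPref false}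
    (hIR1 : Q.le none (some (xC k t)))
    (hblock : ∀ s : Fin k, Sum.inl s ∉ SW k P2 t →
      ¬ (Q.lt (some (xC k t)) (some (xC k s)) ∧ (t : ℕ) < (s : ℕ))) :
    (Mk k).IsStable (prof k Q P2) (SW k P2 t) := by
  refine ⟨isAllocation_SW, ⟨?_, ?_⟩, ?_⟩
  · intro d
    cases d with
    | false =>
      show Q.le none ((Mk k).allocD (SW k P2 t) false)
      rw [allocD_SW_false]
      exact hIR1
    | true =>
      show P2.le none ((Mk k).allocD (SW k P2 t) true)
      by_cases hacc : P2.lt none (some (wC k))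
      · rw [allocD_true_some (inr_mem_SW.2 hacc)]
        exact lo_le_of_lt P2 hacc
      · rw [allocD_true_none (fun hmem => hacc (inr_mem_SW.1 hmem))]
  · intro h
    cases h with
    | false =>
      show ((Mk k).hpref false).le none ((Mk k).allocH (SW k P2 t) false)
      rw [allocH_SW_false]
      exact hpref_le_iff.2 (Nat.zero_le _)
    | true =>
      show ((Mk k).hpref true).le none ((Mk k).allocH (SW k P2 t) true)
      by_cases hacc : P2.lt none (some (wC k))
      · rw [allocH_true_some (inr_mem_SW.2 hacc)]
        exact hpref_le_iff.2 (Nat.zero_le _)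
      · rw [allocH_true_none (fun hmem => hacc (inr_mem_SW.1 hmem))]
        exact lo_le_refl ((Mk k).hpref true) none
  · intro x
    cases x with
    | inl s =>
      rintro ⟨hxY, hlt, hlt2⟩
      have h1 : Q.lt ((Mk k).allocD (SW k P2 t) false) (some (xC k s)) := hlt
      have h2 : ((Mk k).hpref false).lt ((Mk k).allocH (SW k P2 t) false)
          (some ⟨Sum.inl s, rfl⟩) := hlt2
      rw [allocD_SW_false] at h1
      rw [allocH_SW_false] at h2
      have e2 : (t : ℕ) + 1 < (s : ℕ) + 1 := hpref_lt_iff.1 h2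
      exact hblock s hxY ⟨h1, by omega⟩
    | inr u =>
      cases u
      rintro ⟨hxY, hlt, -⟩
      by_cases hacc : P2.lt none (some (wC k))
      · exact hxY (inr_mem_SW.2 hacc)
      · have h1 : P2.lt ((Mk k).allocD (SW k P2 t) true) (some (wC k)) := hlt
        rw [allocD_true_none (fun hmem => hacc (inr_mem_SW.1 hmem))] at h1
        exact hacc h1

/-! ### The `P1` profile -/

lemma isStable_SW_P1 (t : Fin k) :
    (Mk k).IsStable (prof k (P1 k) P2) (SW k P2 t) := by
  apply isStable_SW_of
  · exact P1_le_iff.2 (Nat.zero_le _)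
  · intro s _ ⟨h1, h2⟩
    have e1 : k - (t : ℕ) < k - (s : ℕ) := P1_lt_iff.1 h1
    have := s.isLt
    omega

lemma stable_P1 (hk : 0 < k) {Y : Finset (Mk k).X}
    (h : (Mk k).IsStable (prof k (P1 k) P2) Y) : ∃ t, Y = SW k P2 t := by
  obtain ⟨t, ht⟩ := exists_inl_of_stable hk h
    (P1_lt_iff.2 (by show (0 : ℕ) < k - 0; omega))
  exact ⟨t, eq_SW_of_stable h ht⟩

lemma stableSet_P1 (hk : 0 < k) :
    (Mk k).stableSet (prof k (P1 k) P2) = Finset.image (SW k P2) Finset.univ := by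
  ext Y
  simp only [Market.stableSet, Finset.mem_filter, Finset.mem_univ, true_and, Finset.mem_image]
  constructor
  · intro h
    obtain ⟨t, rfl⟩ := stable_P1 hk h
    exact ⟨t, rfl⟩
  · rintro ⟨t, rfl⟩
    exact isStable_SW_P1 t

lemma card_stableSet_P1 (hk : 0 < k) :
    ((Mk k).stableSet (prof k (P1 k) P2)).card = k := by
  rw [stableSet_P1 hk, Finset.card_image_of_injective _ SW_injective, Finset.card_univ,
    Fintype.card_fin]

lemma sortedStable_P1_false (hk : 0 < k) :
    (Mk k).sortedStable (prof k (P1 k) P2) false =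
      List.ofFn (fun t : Fin k => some (xC k t)) := by
  simp only [Market.sortedStable]
  refine sort_eq_of_sorted ?_ ?_
  · rw [stableSet_P1 hk, Finset.image_val_of_injOn SW_injective.injOn, Multiset.map_map,
      ← Fin.univ_val_map]
    exact Multiset.map_congr rfl (fun t _ => allocD_SW_false)
  · refine List.pairwise_ofFn.2 (fun i j hij => ?_)
    show drank1 k (some (xC k j)) ≤ drank1 k (some (xC k i))
    show k - (j : ℕ) ≤ k - (i : ℕ)
    exact Nat.sub_le_sub_left (Nat.le_of_lt hij) k

lemma nthBest_P1_false (hk : 2 ≤ k) :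
    (Mk k).nthBest (prof k (P1 k) P2) false 2 = some (xC k ⟨1, by omega⟩) := by
  unfold Market.nthBest
  rw [sortedStable_P1_false (by omega)]
  rw [List.getElem?_eq_getElem (by rw [List.length_ofFn]; omega)]
  rw [List.getElem_ofFn]
  rfl

/-! ### The `Q1` (truncated) profile -/

variable {Q1 : (Mk k).DocPref false}

lemma isStable_SW_Q1 (hk : 0 < k) (hQ1 : IsTruncation k hk Q1) :
    (Mk k).IsStable (prof k Q1 P2) (SW k P2 ⟨0, hk⟩) := by
  apply isStable_SW_of
  · exact lo_le_of_lt Q1 hQ1.1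
  · intro s _ ⟨h1, h2⟩
    have hs0 : (s : ℕ) ≠ 0 := by omega
    exact lo_lt_irrefl Q1 _ (lo_lt_trans Q1 (lo_lt_trans Q1 h1 (hQ1.2 s hs0)) hQ1.1)

lemma stable_Q1 (hk : 0 < k) (hQ1 : IsTruncation k hk Q1) {Y : Finset (Mk k).X}
    (h : (Mk k).IsStable (prof k Q1 P2) Y) : Y = SW k P2 ⟨0, hk⟩ := by
  obtain ⟨t, ht⟩ := exists_inl_of_stable hk h hQ1.1
  have ht0 : (t : ℕ) = 0 := by
    by_contra hne
    have h5 : Q1.le none ((Mk k).allocD Y false) := h.2.1.1 false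
    rw [allocD_false_of_mem ht (fun s hs => inl_uniq_of_alloc h.1 hs ht)] at h5
    exact lo_not_le_of_lt Q1 (hQ1.2 t hne) h5
  have : t = ⟨0, hk⟩ := Fin.ext ht0
  subst this
  exact eq_SW_of_stable h ht

lemma stableSet_Q1 (hk : 0 < k) (hQ1 : IsTruncation k hk Q1) :
    (Mk k).stableSet (prof k Q1 P2) = {SW k P2 ⟨0, hk⟩} := by
  ext Y
  simp only [Market.stableSet, Finset.mem_filter, Finset.mem_univ, true_and,
    Finset.mem_singleton]
  constructor
  · exact stable_Q1 hk hQ1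
  · rintro rfl
    exact isStable_SW_Q1 hk hQ1

lemma sortedStable_Q1_false (hk : 0 < k) (hQ1 : IsTruncation k hk Q1) :
    (Mk k).sortedStable (prof k Q1 P2) false = [some (xC k ⟨0, hk⟩)] := by
  simp only [Market.sortedStable]
  rw [stableSet_Q1 hk hQ1]
  simp only [Finset.singleton_val, Multiset.map_singleton, allocD_SW_false,
    Multiset.sort_singleton]

lemma nthBest_Q1_false (hk : 0 < k) (hQ1 : IsTruncation k hk Q1) :
    (Mk k).nthBest (prof k Q1 P2) false 1 = some (xC k ⟨0, hk⟩) := by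
  unfold Market.nthBest
  rw [sortedStable_Q1_false hk hQ1]
  rfl

/-! ### `quantileAlloc` computations -/

lemma allocD_quantileAlloc {P : (Mk k).Prof} {j : ℕ} {t : Fin k}
    (h : (Mk k).nthBest P false j = some (xC k t)) :
    (Mk k).allocD ((Mk k).quantileAlloc P j) false = some (xC k t) := by
  apply allocD_false_of_mem
  · rw [Market.quantileAlloc]
    exact Finset.mem_filter.2 ⟨Finset.mem_univ _, h⟩
  · intro s hs
    rw [Market.quantileAlloc] at hs
    replace hs := Finset.mem_filter.1 hs
    have h2 : (Mk k).nthBest P false j = some ⟨Sum.inl s, rfl⟩ := hs.2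
    rw [h] at h2
    exact (Sum.inl.inj (congrArg Subtype.val (Option.some.inj h2))).symm

/-- A default preference for `d2`, used to build the profile witnessing manipulation. -/
def drank2 (k : ℕ) : Option ((Mk k).Xd true) → ℕ
  | none => 0
  | some _ => 1

lemma drank2_injective (k : ℕ) : Function.Injective (drank2 k) := by
  rintro (_ | ⟨x, hx⟩) (_ | ⟨y, hy⟩) hab
  · rfl
  · exact absurd hab (by simp [drank2])
  · exact absurd hab (by simp [drank2])
  · cases x with
    | inl t => exact Bool.noConfusion hx
    | inr u =>
      cases y with
      | inl s => exact Bool.noConfusion hy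
      | inr v => cases u; cases v; rfl

def P2d (k : ℕ) : (Mk k).DocPref true := LinearOrder.lift' (drank2 k) (drank2_injective k)

end MkMarket

open MkMarket in
/-- For every real `q ∈ (0,1]`, the `q`-quantile stable mechanism
`φ^q` is manipulable: in the market `M_k` with `k` chosen so that `⌈kq⌉ = 2`, the
truncated preference `P1'` (ranking only `x¹` as acceptable) is a manipulation of
`φ^q` at doctor `d1`'s true preference `P1`, since
`φ^q_{d1}(P1', P2) = x¹ P1 x² = φ^q_{d1}(P1, P2)` for every `P2`. -/
theorem quantile_manipulable (q : ℝ) (hq0 : 0 < q) (hq1 : q ≤ 1)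
    (k : ℕ) (hk : 2 ≤ k) (hceil : ⌈(k : ℝ) * q⌉ = 2)
    (Q1 : (Mk k).DocPref false) (hQ1 : IsTruncation k (by omega) Q1) :
    (∀ P2 : (Mk k).DocPref true,
      (Mk k).assign ((Mk k).quantileMech q) (prof k Q1 P2) false =
          some (xC k ⟨0, by omega⟩) ∧
        (Mk k).assign ((Mk k).quantileMech q) (prof k (P1 k) P2) false =
          some (xC k ⟨1, by omega⟩) ∧
        (P1 k).lt (some (xC k ⟨1, by omega⟩)) (some (xC k ⟨0, by omega⟩))) ∧
    (Mk k).IsManipulation ((Mk k).quantileMech q) false (P1 k) Q1 := by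
  have hk0 : 0 < k := by omega
  have hQ1' : IsTruncation k hk0 Q1 := hQ1
  have hnat : ⌈(k : ℝ) * q⌉₊ = 2 := by
    have h := Int.ceil_eq_iff.1 hceil
    have h1 : (1 : ℝ) < (k : ℝ) * q := by push_cast at h; linarith [h.1]
    have h2 : (k : ℝ) * q ≤ 2 := by push_cast at h; linarith [h.2]
    rw [Nat.ceil_eq_iff (by norm_num)]
    constructor <;> push_cast <;> linarith
  have hA : ∀ P2 : (Mk k).DocPref true,
      (Mk k).assign ((Mk k).quantileMech q) (prof k Q1 P2) false =
        some (xC k ⟨0, hk0⟩) := by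
    intro P2
    simp only [Market.assign, Market.quantileMech]
    rw [stableSet_Q1 hk0 hQ1', Finset.card_singleton]
    have hle : ⌈q⌉₊ ≤ 1 := Nat.ceil_le.2 (by exact_mod_cast hq1)
    have hmax : max 1 ⌈((1 : ℕ) : ℝ) * q⌉₊ = 1 := by
      simp only [Nat.cast_one, one_mul]
      omega
    rw [hmax]
    exact allocD_quantileAlloc (nthBest_Q1_false hk0 hQ1')
  have hB : ∀ P2 : (Mk k).DocPref true,
      (Mk k).assign ((Mk k).quantileMech q) (prof k (P1 k) P2) false =
        some (xC k ⟨1, by omega⟩) := by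
    intro P2
    simp only [Market.assign, Market.quantileMech]
    rw [card_stableSet_P1 hk0, hnat]
    rw [show max 1 2 = 2 from rfl]
    exact allocD_quantileAlloc (nthBest_P1_false hk)
  have hlt : (P1 k).lt (some (xC k ⟨1, by omega⟩)) (some (xC k ⟨0, by omega⟩)) :=
    P1_lt_iff.2 (by show k - 1 < k - 0; omega)
  refine ⟨fun P2 => ⟨hA P2, hB P2, hlt⟩, prof k Q1 (P2d k), ?_⟩
  have e1 : Function.update (prof k Q1 (P2d k)) false (P1 k) = prof k (P1 k) (P2d k) := by
    funext d
    cases d with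
    | false => exact Function.update_self (a := (false : (Mk k).D)) _ _
    | true => exact Function.update_of_ne (a := (true : (Mk k).D)) (a' := false) (fun h => Bool.noConfusion h) _ _
  have e2 : Function.update (prof k Q1 (P2d k)) false Q1 = prof k Q1 (P2d k) := by
    funext d
    cases d with
    | false => exact Function.update_self (a := (false : (Mk k).D)) _ _
    | true => exact Function.update_of_ne (a := (true : (Mk k).D)) (a' := false) (fun h => Bool.noConfusion h) _ _
  rw [e1, e2, hA (P2d k), hB (P2d k)]
  exact hlt
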